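/- arXiv:2405.19587 — 2 statements merged into one kernel-verified Lean document; each statement's English description precedes it below -/
import Mathlib

section
/- Let N be a rooted binary level-k phylogenetic network on X, let T be a phylogenetic X-tree in D(N), and let A be a gap-free alignment of characters on X. Then PS(A,T) ≤ (k+1)·PS_sw(A,N) and PS(A,T) ≤ (k+1)·PS_sw'(A,N). -/
noncomputable section
attribute [local instance] Classical.propDecidable

/-! ### Directed graphs -/

structure Dgraph (V : Type) where
  verts : Finset V
  edges : Finset (V × V)
  edges_sub : ∀ e ∈ edges, e.1 ∈ verts ∧ e.2 ∈ verts

namespace Dgraph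

variable {V : Type}

def edgeRel (G : Dgraph V) (u v : V) : Prop := (u, v) ∈ G.edges

def inDeg (G : Dgraph V) (v : V) : ℕ := (G.edges.filter (fun e => e.2 = v)).card

def outDeg (G : Dgraph V) (v : V) : ℕ := (G.edges.filter (fun e => e.1 = v)).card

def Reaches (G : Dgraph V) (u v : V) : Prop := Relation.ReflTransGen G.edgeRel u v

def Acyclic (G : Dgraph V) : Prop := ∀ u v, G.edgeRel u v → ¬ G.Reaches v u

def leaves (G : Dgraph V) : Finset V := G.verts.filter (fun v => G.outDeg v = 0)

def IsSubgraph (H G : Dgraph V) : Prop := H.verts ⊆ G.verts ∧ H.edges ⊆ G.edges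

def adj (G : Dgraph V) (u v : V) : Prop := (u, v) ∈ G.edges ∨ (v, u) ∈ G.edges

def Connected (G : Dgraph V) : Prop :=
  ∀ u ∈ G.verts, ∀ v ∈ G.verts, Relation.ReflTransGen G.adj u v

def deleteVert (G : Dgraph V) (x : V) : Dgraph V where
  verts := G.verts.erase x
  edges := G.edges.filter (fun e => e.1 ≠ x ∧ e.2 ≠ x)
  edges_sub := by
    intro e he
    simp only [Finset.mem_filter] at he
    obtain ⟨he1, hx1, hx2⟩ := he
    exact ⟨Finset.mem_erase.mpr ⟨hx1, (G.edges_sub e he1).1⟩,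
           Finset.mem_erase.mpr ⟨hx2, (G.edges_sub e he1).2⟩⟩

/-- A graph is biconnected if it is connected and cannot be disconnected by
deleting exactly one of its vertices. -/
def Biconnected (G : Dgraph V) : Prop :=
  G.Connected ∧ ∀ x ∈ G.verts, (G.deleteVert x).Connected

/-- A biconnected component: a maximal biconnected subgraph. -/
def IsBicomp (G H : Dgraph V) : Prop :=
  H.IsSubgraph G ∧ H.Biconnected ∧
  ∀ H' : Dgraph V, H'.IsSubgraph G → H'.Biconnected → H.IsSubgraph H' → H' = H

/-- One subdivision step: replace an edge `(u,w)` by `(u,v)`, `(v,w)` for a new vertex `v`. -/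
def SubdivStep (G G' : Dgraph V) : Prop :=
  ∃ u w v, (u, w) ∈ G.edges ∧ v ∉ G.verts ∧
    G'.verts = insert v G.verts ∧
    G'.edges = insert (u, v) (insert (v, w) (G.edges.erase (u, w)))

/-- `S.IsSubdivisionOf G` : `S` can be obtained from `G` by repeatedly subdividing edges
(`G` is a subdivision of itself). -/
def IsSubdivisionOf (S G : Dgraph V) : Prop := Relation.ReflTransGen SubdivStep G S

end Dgraph

/-! ### Rooted binary phylogenetic networks -/

structure PhyloNet (V : Type) (X : Finset V) where
  G : Dgraph V
  root : V
  root_mem : root ∈ G.verts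
  root_inDeg : G.inDeg root = 0
  root_outDeg : G.outDeg root = 1
  acyclic : G.Acyclic
  reach : ∀ v ∈ G.verts, G.Reaches root v
  degrees : ∀ v ∈ G.verts, v ≠ root →
      (G.inDeg v = 1 ∧ G.outDeg v = 2) ∨ (G.inDeg v = 2 ∧ G.outDeg v = 1) ∨
      (G.inDeg v = 1 ∧ G.outDeg v = 0)
  leaves_eq : G.leaves = X
  Xnonempty : X.Nonempty

namespace PhyloNet

variable {V : Type} {X : Finset V}

def IsRetic (N : PhyloNet V X) (v : V) : Prop := N.G.inDeg v = 2

/-- A rooted binary phylogenetic `X`-tree: a network with no reticulations. -/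
def IsTreeNet (N : PhyloNet V X) : Prop := ∀ v ∈ N.G.verts, N.G.inDeg v ≤ 1

/-- `S` is an embedding of `T` in `N`: a subgraph of `N` containing the root of `N`
that is a subdivision of `T`. -/
def IsEmbedding (N : PhyloNet V X) (T : PhyloNet V X) (S : Dgraph V) : Prop :=
  S.IsSubgraph N.G ∧ N.root ∈ S.verts ∧ S.IsSubdivisionOf T.G

/-- `T` is displayed by `N`. -/
def Displays (N T : PhyloNet V X) : Prop :=
  T.IsTreeNet ∧ ∃ S : Dgraph V, N.IsEmbedding T S

/-- A blob of `N`: a biconnected component with at least one reticulation. -/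
def IsBlob (N : PhyloNet V X) (B : Dgraph V) : Prop :=
  Dgraph.IsBicomp N.G B ∧ ∃ v ∈ B.verts, N.IsRetic v

/-- `N` is level-`k`: every biconnected component has at most `k` reticulations. -/
def IsLevel (N : PhyloNet V X) (k : ℕ) : Prop :=
  ∀ H : Dgraph V, Dgraph.IsBicomp N.G H →
    (H.verts.filter (fun v => N.IsRetic v)).card ≤ k

def numRetic (N : PhyloNet V X) : ℕ := (N.G.verts.filter (fun v => N.IsRetic v)).card

/-- Children of a blob `B`: vertices outside `B` that are children of vertices of `B`. -/
def blobChildren (N : PhyloNet V X) (B : Dgraph V) : Finset V :=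
  N.G.verts.filter (fun v => v ∉ B.verts ∧ ∃ u ∈ B.verts, (u, v) ∈ N.G.edges)

/-- Cluster of a vertex: its set of descendant leaves. -/
def cl (N : PhyloNet V X) (v : V) : Finset V := X.filter (fun x => N.G.Reaches v x)

end PhyloNet

/-- Source of a blob: its unique vertex of in-degree zero and out-degree two within the blob. -/
def IsSource {V : Type} (B : Dgraph V) (s : V) : Prop :=
  s ∈ B.verts ∧ B.inDeg s = 0 ∧ B.outDeg s = 2

/-! ### Characters and parsimony -/

/-- A character on `X`: a function that is surjective from `X` onto the set `C` of states. -/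
def IsCharacter {V C : Type} (X : Finset V) (f : V → C) : Prop :=
  ∀ c : C, ∃ x ∈ X, f x = c

/-- An extension of a character `f` (agrees with `f` on the leaves `X`). -/
def IsExtension {V C : Type} (X : Finset V) (f F : V → C) : Prop :=
  ∀ x ∈ X, F x = f x

/-- Changing number of an assignment `F` on a digraph. -/
def ch {V C : Type} (F : V → C) (G : Dgraph V) : ℕ :=
  (G.edges.filter (fun e => F e.1 ≠ F e.2)).card

/-- Parsimony score of `f` on `G` (leaves `X`). -/
def PS {V C : Type} (X : Finset V) (f : V → C) (G : Dgraph V) : ℕ :=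
  sInf {n | ∃ F : V → C, IsExtension X f F ∧ ch F G = n}

/-- Softwired parsimony score of a single character on a network. -/
def PSsw {V C : Type} {X : Finset V} (N : PhyloNet V X) (f : V → C) : ℕ :=
  sInf {n | ∃ T : PhyloNet V X, N.Displays T ∧ PS X f T.G = n}

/-! ### Switchings -/

def reticEdges {V : Type} {X : Finset V} (N : PhyloNet V X) : Finset (V × V) :=
  N.G.edges.filter (fun e => N.G.inDeg e.2 = 2)

def IsSwitching {V : Type} {X : Finset V} (N : PhyloNet V X) (R : Finset (V × V)) : Prop :=
  R ⊆ reticEdges N ∧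
  ∀ v ∈ N.G.verts, N.IsRetic v → (R.filter (fun e => e.2 = v)).card = 1

def switchGraph {V : Type} {X : Finset V} (N : PhyloNet V X) (R : Finset (V × V)) : Dgraph V where
  verts := N.G.verts
  edges := N.G.edges \ (reticEdges N \ R)
  edges_sub := by
    intro e he
    exact N.G.edges_sub e (Finset.mem_sdiff.mp he).1

/-- Suppressing a vertex of in-degree one and out-degree one. -/
def SuppressStep {V : Type} (G G' : Dgraph V) : Prop :=
  ∃ u v w, (u, v) ∈ G.edges ∧ (v, w) ∈ G.edges ∧ G.inDeg v = 1 ∧ G.outDeg v = 1 ∧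
    u ≠ v ∧ w ≠ v ∧
    G'.verts = G.verts.erase v ∧
    G'.edges = insert (u, w) ((G.edges.erase (u, v)).erase (v, w))

/-- Deleting a vertex of out-degree zero that is not a leaf in `X`. -/
def DeleteLeafStep {V : Type} (X : Finset V) (G G' : Dgraph V) : Prop :=
  ∃ v ∈ G.verts, v ∉ X ∧ G.outDeg v = 0 ∧
    G'.verts = G.verts.erase v ∧
    G'.edges = G.edges.filter (fun e => e.2 ≠ v)

def CleanupStep {V : Type} (X : Finset V) (G G' : Dgraph V) : Prop :=
  SuppressStep G G' ∨ DeleteLeafStep X G G'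

/-- The switching `R` yields the phylogenetic tree `T`. -/
def Yields {V : Type} {X : Finset V} (N : PhyloNet V X) (R : Finset (V × V))
    (T : PhyloNet V X) : Prop :=
  T.IsTreeNet ∧ Relation.ReflTransGen (CleanupStep X) (switchGraph N R) T.G

/-- Switching distance `h(N) - |R ∩ R'|`. -/
def switchDist {V : Type} {X : Finset V} (N : PhyloNet V X) (R R' : Finset (V × V)) : ℕ :=
  N.numRetic - (R ∩ R').card

/-! ### rSPR -/

def relPow {α : Type} (r : α → α → Prop) : ℕ → α → α → Prop
  | 0, a, b => a = b
  | n + 1, a, b => ∃ c, r a c ∧ relPow r n c b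

/-- A single rooted subtree prune and regraft operation. -/
def rSPRStep {V : Type} {X : Finset V} (T T' : PhyloNet V X) : Prop :=
  ∃ u v p c a b u',
    (u, v) ∈ T.G.edges ∧ u ≠ T.root ∧ v ≠ T.root ∧
    (p, u) ∈ T.G.edges ∧ (u, c) ∈ T.G.edges ∧ c ≠ v ∧
    (a, b) ∈ insert (p, c) (((T.G.edges.erase (u, v)).erase (p, u)).erase (u, c)) ∧
    ¬ T.G.Reaches v a ∧ ¬ T.G.Reaches v b ∧
    u' ∉ T.G.verts.erase u ∧
    T'.root = T.root ∧
    T'.G.verts = insert u' (T.G.verts.erase u) ∧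
    T'.G.edges = insert (a, u') (insert (u', b) (insert (u', v)
      ((insert (p, c) (((T.G.edges.erase (u, v)).erase (p, u)).erase (u, c))).erase (a, b))))

/-- rSPR distance: minimum number of rSPR operations transforming `T` into `T'`. -/
def rSPRdist {V : Type} {X : Finset V} (T T' : PhyloNet V X) : ℕ :=
  sInf {n | relPow rSPRStep n T T'}

/-! ### Root paths -/

/-- `(u,v)` is an edge of the root path of `G` (with root `r`). -/
def rootPathEdge {V : Type} (G : Dgraph V) (r u v : V) : Prop :=
  (u, v) ∈ G.edges ∧ G.outDeg u = 1 ∧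
  Relation.ReflTransGen (fun a b => (a, b) ∈ G.edges ∧ G.outDeg a = 1) r u

/-- `F` has no character-state transition on any edge of the root path. -/
def NoRootPathChange {V C : Type} (G : Dgraph V) (r : V) (F : V → C) : Prop :=
  ∀ u v, rootPathEdge G r u v → F u = F v

/-! ### Informative blobs -/

/-- `ind(F,B,S) = 0`: `F` assigns the same state to all children of the blob `B`. -/
def SameOnChildren {V C : Type} {X : Finset V} (N : PhyloNet V X) (B : Dgraph V)
    (F : V → C) : Prop :=
  ∀ a ∈ N.blobChildren B, ∀ b ∈ N.blobChildren B, F a = F b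

/-- The number of blobs `B` of `N` with `ind(F,B,S) = 1`. -/
def infBlobCount {V C : Type} {X : Finset V} (N : PhyloNet V X) (F : V → C) : ℕ :=
  Set.ncard {B : Dgraph V | N.IsBlob B ∧ ¬ SameOnChildren N B F}

/-- `b(f,N,S)`: the number of informative blobs of `N` relative to `S` and `f`. -/
def blobScore {V C : Type} {X : Finset V} (N : PhyloNet V X) (f : V → C) (S : Dgraph V) : ℕ :=
  sInf {m | ∃ F : V → C, IsExtension X f F ∧ ch F S = PS X f S ∧ infBlobCount N F = m}

/-- `F` realises `b(f,N,S)`. -/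
def Realises {V C : Type} {X : Finset V} (N : PhyloNet V X) (f : V → C) (S : Dgraph V)
    (F : V → C) : Prop :=
  IsExtension X f F ∧ ch F S = PS X f S ∧ infBlobCount N F = blobScore N f S

/-- A blob `B` is non-informative relative to `S` and `f`. -/
def NonInformative {V C : Type} {X : Finset V} (N : PhyloNet V X) (B S : Dgraph V)
    (f : V → C) : Prop :=
  ∃ F : V → C, IsExtension X f F ∧ ch F S = PS X f S ∧ SameOnChildren N B F

/-! ### Blob reduction / cluster tree pairs -/

/-- Longest-path distance from the root. -/
def distFromRoot {V : Type} {X : Finset V} (N : PhyloNet V X) (v : V) : ℕ :=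
  sSup {n | relPow N.G.edgeRel n N.root v}

/-- The subgraph of `S` rooted at `s`. -/
def subAt {V : Type} (S : Dgraph V) (s : V) : Dgraph V where
  verts := insert s (S.verts.filter (fun v => S.Reaches s v))
  edges := S.edges.filter (fun e => S.Reaches s e.1)
  edges_sub := by
    intro e he
    simp only [Finset.mem_filter] at he
    obtain ⟨he1, hr⟩ := he
    refine ⟨Finset.mem_insert.mpr (Or.inr (Finset.mem_filter.mpr ⟨(S.edges_sub e he1).1, hr⟩)),
      Finset.mem_insert.mpr (Or.inr (Finset.mem_filter.mpr ⟨(S.edges_sub e he1).2, ?_⟩))⟩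
    exact hr.tail (show S.edgeRel e.1 e.2 from he1)

/-- `S(Y)`: the subtree of `S` rooted at `s` together with a new root `ρY` and edge `(ρY, s)`. -/
def clusterY {V : Type} (S : Dgraph V) (s ρY : V) : Dgraph V where
  verts := insert ρY (subAt S s).verts
  edges := insert (ρY, s) (subAt S s).edges
  edges_sub := by
    intro e he
    rcases Finset.mem_insert.mp he with h | h
    · subst h
      exact ⟨Finset.mem_insert_self _ _,
        Finset.mem_insert.mpr (Or.inr (Finset.mem_insert_self _ _))⟩
    · have h2 := (subAt S s).edges_sub e h
      exact ⟨Finset.mem_insert.mpr (Or.inr h2.1), Finset.mem_insert.mpr (Or.inr h2.2)⟩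

/-- `S(Ȳ)`: `S` with the subtree rooted at `s` replaced by a single new leaf `y`. -/
def clusterYbar {V : Type} (S : Dgraph V) (s y : V) : Dgraph V where
  verts := insert y (S.verts.filter (fun v => ¬ S.Reaches s v))
  edges := (S.edges.filter (fun e => ¬ S.Reaches s e.1 ∧ ¬ S.Reaches s e.2)) ∪
           ((S.edges.filter (fun e => e.2 = s ∧ ¬ S.Reaches s e.1)).image (fun e => (e.1, y)))
  edges_sub := by
    intro e he
    rcases Finset.mem_union.mp he with h | h
    · simp only [Finset.mem_filter] at h
      exact ⟨Finset.mem_insert.mpr (Or.inr (Finset.mem_filter.mpr ⟨(S.edges_sub _ h.1).1, h.2.1⟩)),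
        Finset.mem_insert.mpr (Or.inr (Finset.mem_filter.mpr ⟨(S.edges_sub _ h.1).2, h.2.2⟩))⟩
    · simp only [Finset.mem_image, Finset.mem_filter] at h
      obtain ⟨a, ⟨ha, _, hnr⟩, hae⟩ := h
      constructor
      · rw [← hae]
        exact Finset.mem_insert.mpr (Or.inr (Finset.mem_filter.mpr ⟨(S.edges_sub _ ha).1, hnr⟩))
      · rw [← hae]
        exact Finset.mem_insert_self _ _

/-- A pair of cluster extensions with respect to `f`. -/
def ClusterExtPair {V C : Type} (X Y : Finset V) (y ρY : V) (f FY FYb : V → C) : Prop :=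
  (∀ x ∈ Y, FY x = f x) ∧ (∀ x ∈ X \ Y, FYb x = f x) ∧ FYb y = FY ρY

/-! ### Parental trees -/

/-- A vertex of `U*(N)`: a directed path in `N` starting at the root. -/
def UstarVert {V : Type} {X : Finset V} (N : PhyloNet V X) (p : List V) : Prop :=
  p ≠ [] ∧ p.head? = some N.root ∧ p.Chain' (fun a b => (a, b) ∈ N.G.edges)

/-- An edge of `U*(N)`: `q` extends `p` by one additional edge of `N`. -/
def UstarEdge {V : Type} {X : Finset V} (N : PhyloNet V X) (p q : List V) : Prop :=
  UstarVert N p ∧ UstarVert N q ∧ ∃ w, q = p ++ [w]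

/-- `T` is a parental tree of `N`: obtained from a subgraph of `U*(N)` by suppressing
in-degree-one out-degree-one vertices; its leaves are labelled bijectively by `X`
via the endpoint of the corresponding path. -/
def IsParentalTree {V : Type} {X : Finset V} (N : PhyloNet V X) {L : Finset (List V)}
    (T : PhyloNet (List V) L) : Prop :=
  T.IsTreeNet ∧
  (∀ x ∈ X, ∃! p, p ∈ L ∧ p.getLast? = some x) ∧
  (∀ p ∈ L, ∃ x ∈ X, p.getLast? = some x) ∧
  ∃ H : Dgraph (List V),
    (∀ p ∈ H.verts, UstarVert N p) ∧
    (∀ e ∈ H.edges, UstarEdge N e.1 e.2) ∧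
    Relation.ReflTransGen SuppressStep H T.G

/-- Parsimony score of a character `f` on a tree whose leaves are labelled by
elements of `X` via the last vertex of the corresponding path. -/
def PSlab {V C : Type} (L : Finset (List V)) (f : V → C) (G : Dgraph (List V)) : ℕ :=
  sInf {n | ∃ F : List V → C,
    (∀ p ∈ L, ∀ x, p.getLast? = some x → F p = f x) ∧ ch F G = n}

/-- Parental parsimony score. -/
def PSpa {V C : Type} {X : Finset V} (N : PhyloNet V X) (f : V → C) : ℕ :=
  sInf {n | ∃ (L : Finset (List V)) (T : PhyloNet (List V) L),
    IsParentalTree N T ∧ PSlab L f T.G = n}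

/-! ### Undirected graphs, semi-directed networks -/

structure UGraph (V : Type) where
  verts : Finset V
  edges : Finset (Sym2 V)
  edges_sub : ∀ e ∈ edges, ∀ v ∈ e, v ∈ verts
  no_loops : ∀ e ∈ edges, ¬ e.IsDiag

namespace UGraph

variable {V : Type}

def adj (G : UGraph V) (u v : V) : Prop := s(u, v) ∈ G.edges

def degree (G : UGraph V) (v : V) : ℕ := (G.edges.filter (fun e => v ∈ e)).card

def Connected (G : UGraph V) : Prop :=
  ∀ u ∈ G.verts, ∀ v ∈ G.verts, Relation.ReflTransGen G.adj u v

end UGraph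

/-- An unrooted binary phylogenetic `X`-tree: a connected undirected acyclic graph with
leaf set `X` whose inner vertices all have degree three. -/
structure UTree (V : Type) (X : Finset V) where
  g : UGraph V
  connected : g.Connected
  card_eq : g.verts.card = g.edges.card + 1
  leaves_eq : g.verts.filter (fun v => g.degree v = 1) = X
  degree_cases : ∀ v ∈ g.verts, g.degree v = 1 ∨ g.degree v = 3

def USubdivStep {V : Type} (G G' : UGraph V) : Prop :=
  ∃ u w v, s(u, w) ∈ G.edges ∧ v ∉ G.verts ∧
    G'.verts = insert v G.verts ∧
    G'.edges = insert s(u, v) (insert s(v, w) (G.edges.erase s(u, w)))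

def IsUSubdivisionOf {V : Type} (S G : UGraph V) : Prop :=
  Relation.ReflTransGen USubdivStep G S

/-- A binary semi-directed network: directed (reticulation) edges and undirected edges. -/
structure SemiDir (V : Type) where
  verts : Finset V
  dirE : Finset (V × V)
  undirE : Finset (Sym2 V)
  dir_sub : ∀ e ∈ dirE, e.1 ∈ verts ∧ e.2 ∈ verts
  undir_sub : ∀ e ∈ undirE, ∀ v ∈ e, v ∈ verts
  dir_noloop : ∀ e ∈ dirE, e.1 ≠ e.2
  undir_noloop : ∀ e ∈ undirE, ¬ e.IsDiag

namespace SemiDir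

variable {V : Type}

/-- The underlying undirected graph. -/
def und (Ns : SemiDir V) : UGraph V where
  verts := Ns.verts
  edges := Ns.undirE ∪ Ns.dirE.image (fun e => s(e.1, e.2))
  edges_sub := by
    intro e he v hv
    rcases Finset.mem_union.mp he with h | h
    · exact Ns.undir_sub e h v hv
    · obtain ⟨a, ha, hae⟩ := Finset.mem_image.mp h
      rw [← hae] at hv
      rcases Sym2.mem_iff.mp hv with h1 | h1
      · rw [h1]; exact (Ns.dir_sub a ha).1
      · rw [h1]; exact (Ns.dir_sub a ha).2
  no_loops := by
    intro e he
    rcases Finset.mem_union.mp he with h | h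
    · exact Ns.undir_noloop e h
    · obtain ⟨a, ha, hae⟩ := Finset.mem_image.mp h
      rw [← hae]
      simp only [Sym2.isDiag_iff_proj_eq]
      exact Ns.dir_noloop a ha

def isRetic (Ns : SemiDir V) (v : V) : Prop :=
  (Ns.dirE.filter (fun e => e.2 = v)).card = 2

/-- An unrooted phylogenetic `X`-tree is displayed by a semi-directed network. -/
def Displays {X : Finset V} (Ns : SemiDir V) (Tu : UTree V X) : Prop :=
  ∃ S : SemiDir V, S.verts ⊆ Ns.verts ∧ S.dirE ⊆ Ns.dirE ∧ S.undirE ⊆ Ns.undirE ∧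
    (∀ v : V, Ns.isRetic v → (S.dirE.filter (fun e => e.2 = v)).card ≤ 1) ∧
    IsUSubdivisionOf S.und Tu.g

end SemiDir

/-- `Nr` is a rooted partner of `Ns`: `Ns` is obtained from `Nr` by deleting the root,
suppressing the child of the root, and omitting the direction of every
non-reticulation edge. -/
def RootedPartner {V : Type} {X : Finset V} (Nr : PhyloNet V X) (Ns : SemiDir V) : Prop :=
  ∃ v w w', (Nr.root, v) ∈ Nr.G.edges ∧ (v, w) ∈ Nr.G.edges ∧ (v, w') ∈ Nr.G.edges ∧ w ≠ w' ∧
    Ns.verts = (Nr.G.verts.erase Nr.root).erase v ∧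
    Ns.dirE = Nr.G.edges.filter (fun e => Nr.G.inDeg e.2 = 2 ∧ e.1 ≠ v) ∧
    Ns.undirE = insert s(w, w')
      ((Nr.G.edges.filter (fun e => Nr.G.inDeg e.2 ≠ 2 ∧ e.1 ≠ Nr.root ∧ e.1 ≠ v)).image
        (fun e => s(e.1, e.2)))

/-- `Tu` is obtained from the rooted tree `T` by deleting the root and suppressing
its child. -/
def UnrootOf {V : Type} {X : Finset V} (T : PhyloNet V X) (Tu : UTree V X) : Prop :=
  ∃ v w w', (T.root, v) ∈ T.G.edges ∧ (v, w) ∈ T.G.edges ∧ (v, w') ∈ T.G.edges ∧ w ≠ w' ∧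
    Tu.g.verts = (T.G.verts.erase T.root).erase v ∧
    Tu.g.edges = insert s(w, w')
      ((T.G.edges.filter (fun e => e.1 ≠ T.root ∧ e.1 ≠ v)).image (fun e => s(e.1, e.2)))

/-- Changing number on an undirected graph. -/
def chU {V C : Type} (F : V → C) (G : UGraph V) : ℕ :=
  (G.edges.filter (fun e => Sym2.lift ⟨fun a b => F a ≠ F b, fun a b => propext ne_comm⟩ e)).card

/-- Parsimony score on an undirected graph with leaf set `X`. -/
def PSU {V C : Type} (X : Finset V) (f : V → C) (G : UGraph V) : ℕ :=
  sInf {n | ∃ F : V → C, IsExtension X f F ∧ chU F G = n}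

/-- Softwired parsimony score of a character on a semi-directed network. -/
def PSswU {V C : Type} (X : Finset V) (Ns : SemiDir V) (f : V → C) : ℕ :=
  sInf {n | ∃ Tu : UTree V X, Ns.Displays Tu ∧ PSU X f Tu.g = n}

/-!
Fix a tree `T'` displayed by `N` and an optimal extension of `f` on it, moved onto an embedding
`S` of `T'` in `N` (subdividing an edge costs nothing). Extend it to all of `N` by letting every
vertex outside `S` copy the state of its parent, preferring parents in `S`. An edge of `N` that
changes state is then either a changing edge of `S` or the second in-edge `(x, y)` of a
reticulation `y`. In the latter case the parent chains from `x` and from the preferred parent of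
`y` meet and close a cycle through `y`, on which the state is not constant, so the cycle contains
a changing edge of `S`. The cycle lies in one biconnected component, which has at most `k`
reticulations, so every changing edge of `S` is charged at most `k` times. The extension thus
changes at most `(k + 1) PS(f, T')` times on `N`, hence also on the embedding of `T`, and this
bounds `PS(f, T)`. Summing over the characters gives both inequalities.
-/

namespace Dgraph

open Relation

variable {V : Type} {G : Dgraph V} {p : V → V}

theorem ext_of_verts_edges {H : Dgraph V} (hv : G.verts = H.verts) (he : G.edges = H.edges) :
    G = H := by
  cases G; cases H; simp_all

theorem IsSubgraph.trans {H K : Dgraph V} (h₁ : G.IsSubgraph H) (h₂ : H.IsSubgraph K) :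
    G.IsSubgraph K :=
  ⟨h₁.1.trans h₂.1, h₁.2.trans h₂.2⟩

theorem exists_mem_edges_of_inDeg_pos {v : V} (h : 0 < G.inDeg v) :
    ∃ u, (u, v) ∈ G.edges := by
  obtain ⟨e, he⟩ := Finset.card_pos.mp h
  obtain ⟨he, rfl⟩ := Finset.mem_filter.mp he
  exact ⟨e.1, by simpa using he⟩

theorem mem_inEdges {u v : V} (h : (u, v) ∈ G.edges) :
    (u, v) ∈ G.edges.filter (fun e => e.2 = v) :=
  Finset.mem_filter.mpr ⟨h, rfl⟩

theorem inDeg_pos_of_mem_edges {u v : V} (h : (u, v) ∈ G.edges) :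
    0 < G.inDeg v :=
  Finset.card_pos.mpr ⟨(u, v), mem_inEdges h⟩

theorem IsSubdivisionOf.verts_subset {S : Dgraph V} (h : S.IsSubdivisionOf G) :
    G.verts ⊆ S.verts := by
  induction h with
  | refl => exact subset_rfl
  | tail _ hstep ih =>
    obtain ⟨-, -, v, -, -, hV, -⟩ := hstep
    exact ih.trans (hV ▸ Finset.subset_insert _ _)

theorem IsSubdivisionOf.exists_mem_edges {S : Dgraph V} {r : V}
    (hG : ∀ y ∈ G.verts, y ≠ r → ∃ x, (x, y) ∈ G.edges) (h : S.IsSubdivisionOf G) :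
    ∀ y ∈ S.verts, y ≠ r → ∃ x, (x, y) ∈ S.edges := by
  induction h with
  | refl => exact hG
  | tail _ hstep ih =>
    obtain ⟨u, w, v, huw, hv, hV, hE⟩ := hstep
    intro y hy hyr
    rw [hV, Finset.mem_insert] at hy
    rw [hE]
    rcases hy with rfl | hy
    · exact ⟨u, Finset.mem_insert_self _ _⟩
    obtain ⟨x, hx⟩ := ih y hy hyr
    by_cases hxy : (x, y) = (u, w)
    · obtain ⟨-, rfl⟩ := Prod.ext_iff.mp hxy
      exact ⟨v, by simp⟩
    · exact ⟨x, by simp [hx, hxy]⟩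

instance (G : Dgraph V) : Std.Symm G.adj := ⟨fun _ _ h => h.symm⟩

theorem adj_mono {H : Dgraph V} (h : G.edges ⊆ H.edges) : G.adj ≤ H.adj :=
  fun _ _ hab => hab.imp (@h _) (@h _)

theorem deleteVert_edges_subset (G : Dgraph V) (z : V) : (G.deleteVert z).edges ⊆ G.edges :=
  Finset.filter_subset _ _

theorem adj_deleteVert {z a b : V} (h : (a, b) ∈ G.edges) (ha : a ≠ z)
    (hb : b ≠ z) : (G.deleteVert z).adj a b :=
  Or.inl (Finset.mem_filter.mpr ⟨h, ha, hb⟩)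

theorem connected_of_forall_reach (c : V)
    (h : ∀ u ∈ G.verts, ReflTransGen G.adj u c) : G.Connected :=
  fun a ha b hb => (h a ha).trans (Std.Symm.symm _ _ (h b hb))

theorem Connected.reflTransGen_adj {K L : Dgraph V} (hK : K.Connected) (hKL : K.edges ⊆ L.edges)
    {c d : V} (hc : c ∈ K.verts) (hd : d ∈ K.verts) : ReflTransGen L.adj d c :=
  ReflTransGen.mono (adj_mono hKL) _ _ (hK d hd c hc)

def union (G H : Dgraph V) : Dgraph V where
  verts := G.verts ∪ H.verts
  edges := G.edges ∪ H.edges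
  edges_sub e he := by
    rcases Finset.mem_union.mp he with h | h
    · exact ⟨Finset.mem_union_left _ (G.edges_sub e h).1,
        Finset.mem_union_left _ (G.edges_sub e h).2⟩
    · exact ⟨Finset.mem_union_right _ (H.edges_sub e h).1,
        Finset.mem_union_right _ (H.edges_sub e h).2⟩

theorem Biconnected.connected_deleteVert (hG : G.Biconnected) (z : V) :
    (G.deleteVert z).Connected := by
  by_cases hz : z ∈ G.verts
  · exact hG.2 z hz
  · have hE : G.edges ⊆ (G.deleteVert z).edges := fun e he =>
      Finset.mem_filter.mpr ⟨he, fun h => hz (h ▸ (G.edges_sub e he).1),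
        fun h => hz (h ▸ (G.edges_sub e he).2)⟩
    exact fun a ha b hb =>
      hG.1.reflTransGen_adj hE (Finset.mem_of_mem_erase hb) (Finset.mem_of_mem_erase ha)

theorem Biconnected.union {H : Dgraph V} (hG : G.Biconnected) (hH : H.Biconnected) {u v : V}
    (huG : u ∈ G.verts) (huH : u ∈ H.verts) (hvG : v ∈ G.verts) (hvH : v ∈ H.verts)
    (huv : u ≠ v) : (G.union H).Biconnected := by
  refine ⟨connected_of_forall_reach u fun d hd => ?_, fun z _ => ?_⟩
  · rcases Finset.mem_union.mp hd with hd | hd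
    · exact hG.1.reflTransGen_adj Finset.subset_union_left huG hd
    · exact hH.1.reflTransGen_adj Finset.subset_union_right huH hd
  obtain ⟨c, hcG, hcH, hcz⟩ : ∃ c ∈ G.verts, c ∈ H.verts ∧ c ≠ z := by
    by_cases huz : u = z
    · exact ⟨v, hvG, hvH, huz ▸ huv.symm⟩
    · exact ⟨u, huG, huH, huz⟩
  refine connected_of_forall_reach c fun d hd => ?_
  obtain ⟨hdz, hd⟩ := Finset.mem_erase.mp hd
  have hK : ∀ K : Dgraph V, K.Biconnected → K.edges ⊆ (G.union H).edges → c ∈ K.verts →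
      d ∈ K.verts → ReflTransGen ((G.union H).deleteVert z).adj d c := fun K hK hKE hc hd =>
    (hK.connected_deleteVert z).reflTransGen_adj (L := (G.union H).deleteVert z)
      (Finset.filter_subset_filter _ hKE)
      (Finset.mem_erase.mpr ⟨hcz, hc⟩) (Finset.mem_erase.mpr ⟨hdz, hd⟩)
  rcases Finset.mem_union.mp hd with hd | hd
  · exact hK G hG Finset.subset_union_left hcG hd
  · exact hK H hH Finset.subset_union_right hcH hd

theorem exists_isBicomp {H : Dgraph V} (hHG : H.IsSubgraph G) (hH : H.Biconnected) :
    ∃ B, G.IsBicomp B ∧ H.IsSubgraph B := by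
  by_cases hmax : ∀ H', H'.IsSubgraph G → H'.Biconnected → H.IsSubgraph H' → H' = H
  · exact ⟨H, ⟨hHG, hH, hmax⟩, subset_rfl, subset_rfl⟩
  push Not at hmax
  obtain ⟨H', hH'G, hH', hHH', hne⟩ := hmax
  have hlt : H.verts.card < H'.verts.card ∨ H.edges.card < H'.edges.card := by
    by_contra! hle
    exact hne (ext_of_verts_edges (Finset.eq_of_subset_of_card_le hHH'.1 hle.1).symm
      (Finset.eq_of_subset_of_card_le hHH'.2 hle.2).symm)
  have := Finset.card_le_card hH'G.1
  have := Finset.card_le_card hH'G.2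
  have := Finset.card_le_card hHH'.1
  have := Finset.card_le_card hHH'.2
  obtain ⟨B, hB, hH'B⟩ := exists_isBicomp hH'G hH'
  exact ⟨B, hB, hHH'.trans hH'B⟩
termination_by (G.verts.card - H.verts.card) + (G.edges.card - H.edges.card)

theorem IsBicomp.eq_of_mem_edges {B B' : Dgraph V} (hB : G.IsBicomp B) (hB' : G.IsBicomp B')
    {e : V × V} (hne : e.1 ≠ e.2) (he : e ∈ B.edges) (he' : e ∈ B'.edges) : B = B' := by
  have hU := hB.2.1.union hB'.2.1 (B.edges_sub e he).1 (B'.edges_sub e he').1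
    (B.edges_sub e he).2 (B'.edges_sub e he').2 hne
  have hUG : (B.union B').IsSubgraph G :=
    ⟨Finset.union_subset hB.1.1 hB'.1.1, Finset.union_subset hB.1.2 hB'.1.2⟩
  exact (hB.2.2 _ hUG hU ⟨Finset.subset_union_left, Finset.subset_union_left⟩).symm.trans
    (hB'.2.2 _ hUG hU ⟨Finset.subset_union_right, Finset.subset_union_right⟩)

def rank (G : Dgraph V) (v : V) : ℕ := (G.verts.filter (fun u => G.Reaches u v)).card

theorem rank_lt_of_mem_edges (hG : G.Acyclic) {a b : V} (h : (a, b) ∈ G.edges) :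
    G.rank a < G.rank b := by
  refine Finset.card_lt_card ⟨fun u hu => ?_, fun hsub => ?_⟩
  · obtain ⟨hu, hub⟩ := Finset.mem_filter.mp hu
    exact Finset.mem_filter.mpr ⟨hu, hub.tail h⟩
  have hb := hsub (Finset.mem_filter.mpr ⟨(G.edges_sub _ h).2, .refl⟩)
  exact hG a b h (Finset.mem_filter.mp hb).2

abbrev ParentChain (G : Dgraph V) (p : V → V) : V → V → Prop :=
  ReflTransGen (fun a b => b = p a ∧ (b, a) ∈ G.edges)

namespace ParentChain

theorem rank_le (hG : G.Acyclic) {a b : V} (h : G.ParentChain p a b) : G.rank b ≤ G.rank a := by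
  induction h with
  | refl => exact le_rfl
  | tail _ hstep ih => exact (rank_lt_of_mem_edges hG hstep.2).le.trans ih

theorem eq_of_rank_le (hG : G.Acyclic) {a b : V} (h : G.ParentChain p a b)
    (hr : G.rank a ≤ G.rank b) : a = b := by
  rcases h.cases_head with rfl | ⟨c, hac, hcb⟩
  · rfl
  · have := rank_lt_of_mem_edges hG hac.2
    have := rank_le hG hcb
    omega

theorem antisymm (hG : G.Acyclic) {a b : V} (hab : G.ParentChain p a b)
    (hba : G.ParentChain p b a) : a = b :=
  hab.eq_of_rank_le hG (hba.rank_le hG)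

theorem head_of_ne {a b : V} (h : G.ParentChain p a b) (hab : a ≠ b) :
    (p a, a) ∈ G.edges ∧ G.ParentChain p (p a) b := by
  rcases h.cases_head with rfl | ⟨c, ⟨rfl, hac⟩, hcb⟩
  · exact absurd rfl hab
  · exact ⟨hac, hcb⟩

theorem mem_verts {a b : V} (h : G.ParentChain p a b) (ha : a ∈ G.verts) : b ∈ G.verts := by
  induction h with
  | refl => exact ha
  | tail _ hstep _ => exact (G.edges_sub _ hstep.2).1

theorem reflTransGen_of_forall {r : V → V → Prop} {c d : V} (h : G.ParentChain p c d)
    (hr : ∀ t, G.ParentChain p c t → G.ParentChain p t d → t ≠ d → r t (p t)) :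
    ReflTransGen r c d := by
  induction h using ReflTransGen.head_induction_on with
  | refl => exact .refl
  | @head a c hstep hcd ih =>
    by_cases had : a = d
    · exact had ▸ .refl
    obtain ⟨rfl, hedge⟩ := hstep
    exact .head (hr a .refl (.head ⟨rfl, hedge⟩ hcd) had)
      (ih fun t hct htd htne => hr t (.head ⟨rfl, hedge⟩ hct) htd htne)

theorem apply_eq_of_forall {β : Type*} {f : V → β} {c d : V} (h : G.ParentChain p c d)
    (hf : ∀ t, G.ParentChain p c t → G.ParentChain p t d → t ≠ d → f t = f (p t)) :
    f c = f d := by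
  suffices ∀ {a b}, ReflTransGen (fun a b => f a = f b) a b → f a = f b from
    this (h.reflTransGen_of_forall hf)
  intro a b hab
  induction hab with
  | refl => rfl
  | tail _ h ih => exact ih.trans h

end ParentChain

theorem exists_parentChain_meet (hG : G.Acyclic) {a b r : V} (ha : a ∈ G.verts)
    (har : G.ParentChain p a r) (hbr : G.ParentChain p b r) :
    ∃ m, G.ParentChain p a m ∧ G.ParentChain p b m ∧
      ∀ t, G.ParentChain p a t → G.ParentChain p b t → G.ParentChain p t m → t = m := by
  obtain ⟨m, hm, hmax⟩ := Finset.exists_max_image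
    (G.verts.filter (fun t => G.ParentChain p a t ∧ G.ParentChain p b t)) G.rank
    ⟨r, Finset.mem_filter.mpr ⟨har.mem_verts ha, har, hbr⟩⟩
  obtain ⟨-, ham, hbm⟩ := Finset.mem_filter.mp hm
  refine ⟨m, ham, hbm, fun t hat hbt htm => htm.eq_of_rank_le hG ?_⟩
  exact hmax t (Finset.mem_filter.mpr ⟨hat.mem_verts ha, hat, hbt⟩)

def ofEdges (E : Finset (V × V)) : Dgraph V where
  verts := E.image Prod.fst ∪ E.image Prod.snd
  edges := E
  edges_sub _ he := ⟨Finset.mem_union_left _ (Finset.mem_image_of_mem _ he),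
    Finset.mem_union_right _ (Finset.mem_image_of_mem _ he)⟩

theorem mem_ofEdges_verts {E : Finset (V × V)} {u : V} :
    u ∈ (ofEdges E).verts ↔ ∃ e ∈ E, e.1 = u ∨ e.2 = u := by
  simp only [ofEdges, Finset.mem_union, Finset.mem_image]
  constructor
  · rintro (⟨e, he, rfl⟩ | ⟨e, he, rfl⟩)
    exacts [⟨e, he, Or.inl rfl⟩, ⟨e, he, Or.inr rfl⟩]
  · rintro ⟨e, he, h | h⟩
    exacts [Or.inl ⟨e, he, h⟩, Or.inr ⟨e, he, h⟩]

def chainEdges (G : Dgraph V) (p : V → V) (x m : V) : Finset (V × V) :=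
  G.edges.filter fun e =>
    e.1 = p e.2 ∧ G.ParentChain p x e.2 ∧ G.ParentChain p e.2 m ∧ e.2 ≠ m

theorem mem_chainEdges {x m t : V} (hxt : G.ParentChain p x t) (htm : G.ParentChain p t m)
    (ht : t ≠ m) : (p t, t) ∈ G.chainEdges p x m :=
  Finset.mem_filter.mpr ⟨(htm.head_of_ne ht).1, rfl, hxt, htm, ht⟩

theorem reflTransGen_adj_deleteVert (hG : G.Acyclic) {H : Dgraph V} {x m c d z : V}
    (hH : G.chainEdges p x m ⊆ H.edges) (hxc : G.ParentChain p x c)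
    (hcd : G.ParentChain p c d) (hdm : G.ParentChain p d m)
    (hz : ∀ t, G.ParentChain p c t → G.ParentChain p t d → t ≠ z) :
    ReflTransGen (H.deleteVert z).adj c d := by
  refine hcd.reflTransGen_of_forall fun t hct htd htd' => Or.inr ?_
  have htm : t ≠ m := by
    rintro rfl
    exact htd' (ParentChain.antisymm hG htd hdm)
  have hpt := (htd.head_of_ne htd').2
  refine Finset.mem_filter.mpr ⟨hH (mem_chainEdges (hxc.trans hct) (htd.trans hdm) htm), ?_, ?_⟩
  exacts [hz _ (hct.tail ⟨rfl, (htd.head_of_ne htd').1⟩) hpt, hz t hct htd]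

/-- The cycle formed by the edges `(x, v)` and `(x', v)` and the `p`-chains from `x` and `x'`
up to their meeting point `m`. -/
def lasso (G : Dgraph V) (p : V → V) (x x' v m : V) : Dgraph V :=
  ofEdges (insert (x, v) (insert (x', v) (G.chainEdges p x m ∪ G.chainEdges p x' m)))

theorem mem_lasso_edges_left {x x' v m : V} : (x, v) ∈ (G.lasso p x x' v m).edges :=
  Finset.mem_insert_self _ _

theorem mem_lasso_edges_right {x x' v m : V} : (x', v) ∈ (G.lasso p x x' v m).edges :=
  Finset.mem_insert_of_mem (Finset.mem_insert_self _ _)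

theorem chainEdges_subset_lasso_edges_left {x x' v m : V} :
    G.chainEdges p x m ⊆ (G.lasso p x x' v m).edges := fun _ he =>
  Finset.mem_insert_of_mem (Finset.mem_insert_of_mem (Finset.mem_union_left _ he))

theorem chainEdges_subset_lasso_edges_right {x x' v m : V} :
    G.chainEdges p x' m ⊆ (G.lasso p x x' v m).edges := fun _ he =>
  Finset.mem_insert_of_mem (Finset.mem_insert_of_mem (Finset.mem_union_right _ he))

theorem parentChain_of_mem_chainEdges {x m : V} {e : V × V} (he : e ∈ G.chainEdges p x m) :
    (G.ParentChain p x e.1 ∧ G.ParentChain p e.1 m) ∧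
      (G.ParentChain p x e.2 ∧ G.ParentChain p e.2 m) := by
  obtain ⟨he, h1, hxt, htm, ht⟩ := Finset.mem_filter.mp he
  rw [h1]
  exact ⟨⟨hxt.tail ⟨rfl, h1 ▸ he⟩, (htm.head_of_ne ht).2⟩, hxt, htm⟩

theorem mem_lasso_verts {x x' v m u : V} (hxm : G.ParentChain p x m)
    (hx'm : G.ParentChain p x' m) (hu : u ∈ (G.lasso p x x' v m).verts) :
    u = v ∨ (G.ParentChain p x u ∧ G.ParentChain p u m) ∨
      (G.ParentChain p x' u ∧ G.ParentChain p u m) := by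
  obtain ⟨e, he, hue⟩ := mem_ofEdges_verts.mp hu
  simp only [Finset.mem_insert, Finset.mem_union] at he
  rcases he with rfl | rfl | he | he
  · rcases hue with rfl | rfl
    exacts [Or.inr (Or.inl ⟨.refl, hxm⟩), Or.inl rfl]
  · rcases hue with rfl | rfl
    exacts [Or.inr (Or.inr ⟨.refl, hx'm⟩), Or.inl rfl]
  · have := parentChain_of_mem_chainEdges he
    rcases hue with rfl | rfl
    exacts [Or.inr (Or.inl this.1), Or.inr (Or.inl this.2)]
  · have := parentChain_of_mem_chainEdges he
    rcases hue with rfl | rfl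
    exacts [Or.inr (Or.inr this.1), Or.inr (Or.inr this.2)]

/-- After deleting `z ≠ v`, a vertex `a ≠ z` on the chain from `x` still reaches `v`: down the
chain to `x` if `z` is not in the way, otherwise up to `m` and down the other chain to `x'`. -/
theorem reflTransGen_adj_deleteVert_apex (hG : G.Acyclic) {H : Dgraph V} {x x' v m a z : V}
    (hxv : (x, v) ∈ H.edges) (hx'v : (x', v) ∈ H.edges)
    (hx : G.chainEdges p x m ⊆ H.edges) (hx' : G.chainEdges p x' m ⊆ H.edges)
    (hx'm : G.ParentChain p x' m)
    (hmeet : ∀ t, G.ParentChain p x t → G.ParentChain p x' t → G.ParentChain p t m → t = m)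
    (hxa : G.ParentChain p x a) (ham : G.ParentChain p a m) (haz : a ≠ z) (hvz : v ≠ z) :
    ReflTransGen (H.deleteVert z).adj a v := by
  by_cases hz : G.ParentChain p x z ∧ G.ParentChain p z a
  · have hz' : ¬ (G.ParentChain p x' z ∧ G.ParentChain p z m) := by
      rintro ⟨hx'z, hzm⟩
      cases hmeet z hz.1 hx'z hzm
      exact haz (ParentChain.antisymm hG ham hz.2)
    have hup := reflTransGen_adj_deleteVert hG hx hxa ham .refl fun t hat htm htz => by
      subst htz; exact haz (ParentChain.antisymm hG hat hz.2)
    have hdown := reflTransGen_adj_deleteVert hG hx' .refl hx'm .refl fun t hx't htm htz => by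
      subst htz; exact hz' ⟨hx't, htm⟩
    refine (hup.trans (Std.Symm.symm _ _ hdown)).tail (adj_deleteVert hx'v ?_ hvz)
    rintro rfl
    exact hz' ⟨.refl, hx'm⟩
  · have hdown := reflTransGen_adj_deleteVert hG hx .refl hxa ham fun t hxt hta htz => by
      subst htz; exact hz ⟨hxt, hta⟩
    refine (Std.Symm.symm _ _ hdown).tail (adj_deleteVert hxv ?_ hvz)
    rintro rfl
    exact hz ⟨.refl, hxa⟩

theorem lasso_biconnected (hG : G.Acyclic) {x x' v m : V} (hxv : G.rank x < G.rank v)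
    (hx'v : G.rank x' < G.rank v) (hxm : G.ParentChain p x m) (hx'm : G.ParentChain p x' m)
    (hmeet : ∀ t, G.ParentChain p x t → G.ParentChain p x' t → G.ParentChain p t m →
      t = m) :
    (G.lasso p x x' v m).Biconnected := by
  set L := G.lasso p x x' v m
  have hxvL : (x, v) ∈ L.edges := mem_lasso_edges_left
  have hx'vL : (x', v) ∈ L.edges := mem_lasso_edges_right
  have hxL : G.chainEdges p x m ⊆ L.edges := chainEdges_subset_lasso_edges_left
  have hx'L : G.chainEdges p x' m ⊆ L.edges := chainEdges_subset_lasso_edges_right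
  have hmeet' : ∀ t, G.ParentChain p x' t → G.ParentChain p x t → G.ParentChain p t m →
      t = m :=
    fun t h' h => hmeet t h h'
  have hoff : ∀ {y u : V}, G.rank y < G.rank v → G.ParentChain p y u →
      ∀ t, G.ParentChain p u t → G.ParentChain p t m → t ≠ v := by
    rintro y u hy hyu t hut - rfl
    have := ParentChain.rank_le hG (hyu.trans hut)
    omega
  have hreach_m : ∀ u ∈ L.verts, u ≠ v → ReflTransGen (L.deleteVert v).adj u m := by
    intro u hu huv
    rcases mem_lasso_verts hxm hx'm hu with rfl | ⟨hxu, hum⟩ | ⟨hx'u, hum⟩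
    · exact absurd rfl huv
    · exact reflTransGen_adj_deleteVert hG hxL hxu hum .refl (hoff hxv hxu)
    · exact reflTransGen_adj_deleteVert hG hx'L hx'u hum .refl (hoff hx'v hx'u)
  have hreach_v : ∀ z, v ≠ z → ∀ u ∈ L.verts, u ≠ z →
      ReflTransGen (L.deleteVert z).adj u v := by
    intro z hvz u hu huz
    rcases mem_lasso_verts hxm hx'm hu with rfl | ⟨hxu, hum⟩ | ⟨hx'u, hum⟩
    · exact .refl
    · exact reflTransGen_adj_deleteVert_apex hG hxvL hx'vL hxL hx'L hx'm hmeet hxu hum huz hvz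
    · exact reflTransGen_adj_deleteVert_apex hG hx'vL hxvL hx'L hxL hxm hmeet' hx'u hum huz hvz
  have hxv' : x ≠ v := fun h => (h ▸ hxv).false
  refine ⟨connected_of_forall_reach m fun u hu => ?_, fun z _ => ?_⟩
  · have hmono := ReflTransGen.mono (adj_mono (L.deleteVert_edges_subset v))
    by_cases huv : u = v
    · subst huv
      exact .head (Or.inr hxvL)
        (hmono _ _ (hreach_m x (mem_ofEdges_verts.mpr ⟨_, hxvL, Or.inl rfl⟩) hxv'))
    · exact hmono _ _ (hreach_m u hu huv)
  · obtain rfl | hvz := eq_or_ne v z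
    · exact connected_of_forall_reach m fun u hu =>
        hreach_m u (Finset.mem_of_mem_erase hu) (Finset.ne_of_mem_erase hu)
    · exact connected_of_forall_reach v fun u hu =>
        hreach_v z hvz u (Finset.mem_of_mem_erase hu) (Finset.ne_of_mem_erase hu)

theorem lasso_isSubgraph {x x' v m : V} (hxv : (x, v) ∈ G.edges) (hx'v : (x', v) ∈ G.edges) :
    (G.lasso p x x' v m).IsSubgraph G := by
  have hE : (G.lasso p x x' v m).edges ⊆ G.edges := by
    refine Finset.insert_subset hxv (Finset.insert_subset hx'v
      (Finset.union_subset (Finset.filter_subset _ _) (Finset.filter_subset _ _)))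
  refine ⟨fun u hu => ?_, hE⟩
  obtain ⟨e, he, rfl | rfl⟩ := mem_ofEdges_verts.mp hu
  exacts [(G.edges_sub e (hE he)).1, (G.edges_sub e (hE he)).2]

def preferredParent (S G : Dgraph V) (v : V) : V :=
  if h : ∃ u, (u, v) ∈ S.edges then h.choose
  else if h' : ∃ u, (u, v) ∈ G.edges then h'.choose else v

theorem preferredParent_mem_edges_of_exists {S : Dgraph V} (G : Dgraph V) {v : V}
    (h : ∃ u, (u, v) ∈ S.edges) : (S.preferredParent G v, v) ∈ S.edges := by
  rw [preferredParent, dif_pos h]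
  exact h.choose_spec

theorem preferredParent_mem_edges {S G : Dgraph V} (hSG : S.edges ⊆ G.edges) {v : V}
    (h : ∃ u, (u, v) ∈ G.edges) : (S.preferredParent G v, v) ∈ G.edges := by
  by_cases hS : ∃ u, (u, v) ∈ S.edges
  · exact hSG (preferredParent_mem_edges_of_exists G hS)
  · rw [preferredParent, dif_neg hS, dif_pos h]
    exact h.choose_spec

end Dgraph

section Changing

variable {V C : Type}

def changingEdges (F : V → C) (G : Dgraph V) : Finset (V × V) :=
  G.edges.filter fun e => F e.1 ≠ F e.2

theorem mem_changingEdges {F : V → C} {G : Dgraph V} {e : V × V} :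
    e ∈ changingEdges F G ↔ e ∈ G.edges ∧ F e.1 ≠ F e.2 :=
  Finset.mem_filter

theorem ch_mono (F : V → C) {G H : Dgraph V} (h : G.edges ⊆ H.edges) : ch F G ≤ ch F H :=
  Finset.card_le_card (Finset.filter_subset_filter _ h)

theorem ch_congr {F F' : V → C} {G : Dgraph V} (h : ∀ x ∈ G.verts, F x = F' x) :
    ch F G = ch F' G := by
  unfold ch
  congr 1
  refine Finset.filter_congr fun e he => ?_
  rw [h _ (G.edges_sub e he).1, h _ (G.edges_sub e he).2]

/-- Contracting the new vertex `v` of a subdivision step back onto the edge `(u, w)`. -/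
def contractEdge (u w v : V) (e : V × V) : V × V :=
  (if e.1 = v then u else e.1, if e.2 = v then w else e.2)

theorem ch_le_ch_of_subdivStep (F : V → C) {G G' : Dgraph V} (h : G.SubdivStep G') :
    ch F G ≤ ch F G' := by
  obtain ⟨u, w, v, huw, hv, -, hE⟩ := h
  refine Finset.card_le_card_of_surjOn (contractEdge u w v) fun e he => ?_
  obtain ⟨he, hFe⟩ := Finset.mem_filter.mp he
  obtain ⟨he1, he2⟩ := G.edges_sub e he
  simp only [Set.mem_image, Finset.coe_filter, Set.mem_ofPred_eq, hE, Finset.mem_insert,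
    Finset.mem_erase]
  by_cases heuw : e = (u, w)
  · subst heuw
    by_cases hFuv : F u = F v
    · exact ⟨(v, w), ⟨Or.inr (Or.inl rfl), hFuv ▸ hFe⟩, by simp [contractEdge]⟩
    · exact ⟨(u, v), ⟨Or.inl rfl, hFuv⟩, by simp [contractEdge]⟩
  · refine ⟨e, ⟨Or.inr (Or.inr ⟨heuw, he⟩), hFe⟩, ?_⟩
    simp [contractEdge, ne_of_mem_of_not_mem he1 hv, ne_of_mem_of_not_mem he2 hv]

theorem ch_le_ch_of_isSubdivisionOf (F : V → C) {G S : Dgraph V} (h : S.IsSubdivisionOf G) :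
    ch F G ≤ ch F S := by
  induction h with
  | refl => exact le_rfl
  | tail _ hstep ih => exact ih.trans (ch_le_ch_of_subdivStep F hstep)

theorem ch_update_le_of_subdivStep (F : V → C) {G G' : Dgraph V} {u w v : V}
    (huw : (u, w) ∈ G.edges) (hv : v ∉ G.verts)
    (hE : G'.edges = insert (u, v) (insert (v, w) (G.edges.erase (u, w)))) :
    ch (Function.update F v (F w)) G' ≤ ch F G := by
  have hnv : ∀ {x}, x ∈ G.verts → x ≠ v := fun hx => ne_of_mem_of_not_mem hx hv
  have hu := hnv (G.edges_sub _ huw).1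
  have hw := hnv (G.edges_sub _ huw).2
  refine (Finset.card_le_card fun e he => ?_).trans
    (Finset.card_image_le (f := fun e => if e = (u, w) then (u, v) else e))
  obtain ⟨he, hch⟩ := Finset.mem_filter.mp he
  rw [hE, Finset.mem_insert, Finset.mem_insert, Finset.mem_erase] at he
  rcases he with rfl | rfl | ⟨hne, he⟩
  · refine Finset.mem_image.mpr ⟨(u, w), Finset.mem_filter.mpr ⟨huw, ?_⟩, if_pos rfl⟩
    simpa [Function.update_of_ne hu] using hch
  · simp [Function.update_of_ne hw] at hch
  · refine Finset.mem_image.mpr ⟨e, Finset.mem_filter.mpr ⟨he, ?_⟩, if_neg hne⟩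
    rwa [Function.update_of_ne (hnv (G.edges_sub e he).1),
      Function.update_of_ne (hnv (G.edges_sub e he).2)] at hch

theorem exists_ch_le_of_isSubdivisionOf (F : V → C) {G S : Dgraph V}
    (h : S.IsSubdivisionOf G) : ∃ F', (∀ x ∈ G.verts, F' x = F x) ∧ ch F' S ≤ ch F G := by
  induction h with
  | refl => exact ⟨F, fun _ _ => rfl, le_rfl⟩
  | @tail H _ hGH hstep ih =>
    obtain ⟨F', hF', hch⟩ := ih
    obtain ⟨u, w, v, huw, hv, -, hE⟩ := hstep
    refine ⟨Function.update F' v (F' w), fun x hx => ?_,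
      (ch_update_le_of_subdivStep F' huw hv hE).trans hch⟩
    have hxH : x ∈ H.verts := Dgraph.IsSubdivisionOf.verts_subset hGH hx
    rw [Function.update_of_ne (ne_of_mem_of_not_mem hxH hv), hF' x hx]

theorem ch_le_ch_add_card_sdiff (F : V → C) (G S : Dgraph V) :
    ch F G ≤ ch F S + (changingEdges F G \ S.edges).card := by
  refine (Finset.card_le_card fun e he => ?_).trans (Finset.card_union_le _ _)
  by_cases heS : e ∈ S.edges
  · exact Finset.mem_union_left _ (Finset.mem_filter.mpr ⟨heS, (Finset.mem_filter.mp he).2⟩)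
  · exact Finset.mem_union_right _ (Finset.mem_sdiff.mpr ⟨he, heS⟩)

theorem PS_le_ch {X : Finset V} {f F : V → C} (G : Dgraph V) (hF : IsExtension X f F) :
    PS X f G ≤ ch F G :=
  Nat.sInf_le ⟨F, hF, rfl⟩

theorem exists_ch_eq_PS (X : Finset V) (f : V → C) (G : Dgraph V) :
    ∃ F, IsExtension X f F ∧ ch F G = PS X f G := by
  have : {n | ∃ F : V → C, IsExtension X f F ∧ ch F G = n}.Nonempty :=
    ⟨ch f G, f, fun _ _ => rfl, rfl⟩
  exact Nat.sInf_mem this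

end Changing

namespace PhyloNet

variable {V C : Type} {X : Finset V}

theorem subset_verts (N : PhyloNet V X) : X ⊆ N.G.verts := fun _ hx =>
  (Finset.mem_filter.mp (N.leaves_eq.symm ▸ hx)).1

theorem notMem_edges_root (N : PhyloNet V X) (u : V) : (u, N.root) ∉ N.G.edges := fun h =>
  (Dgraph.inDeg_pos_of_mem_edges h).ne' N.root_inDeg

theorem exists_mem_edges_of_ne_root (N : PhyloNet V X) {v : V} (hv : v ∈ N.G.verts)
    (hvr : v ≠ N.root) : ∃ u, (u, v) ∈ N.G.edges :=
  Dgraph.exists_mem_edges_of_inDeg_pos (by rcases N.degrees v hv hvr with h | h | h <;> omega)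

theorem inDeg_le_two (N : PhyloNet V X) (v : V) : N.G.inDeg v ≤ 2 := by
  by_cases hv : v ∈ N.G.verts
  · by_cases hvr : v = N.root
    · rw [hvr, N.root_inDeg]; omega
    · rcases N.degrees v hv hvr with h | h | h <;> omega
  · by_contra h
    obtain ⟨u, hu⟩ := Dgraph.exists_mem_edges_of_inDeg_pos (by omega : 0 < N.G.inDeg v)
    exact hv (N.G.edges_sub _ hu).2

theorem fst_ne_snd_of_mem_edges (N : PhyloNet V X) {e : V × V} (he : e ∈ N.G.edges) :
    e.1 ≠ e.2 := fun h => N.acyclic e.1 e.2 he (h ▸ .refl)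

/-- The properties of an embedded tree that the parsimony bound relies on. -/
structure IsAncestralSubgraph (N : PhyloNet V X) (S : Dgraph V) : Prop where
  edges_subset : S.edges ⊆ N.G.edges
  subset_verts : X ⊆ S.verts
  exists_mem_edges : ∀ v ∈ S.verts, v ≠ N.root → ∃ u, (u, v) ∈ S.edges

theorem IsEmbedding.isAncestralSubgraph {N T : PhyloNet V X} {S : Dgraph V}
    (h : N.IsEmbedding T S) : N.IsAncestralSubgraph S := by
  obtain ⟨hSN, hroot, hsubdiv⟩ := h
  have hpar := hsubdiv.exists_mem_edges fun _ hy hyr => T.exists_mem_edges_of_ne_root hy hyr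
  have hTroot : T.root = N.root := by
    by_contra hne
    obtain ⟨u, hu⟩ := hpar N.root hroot (Ne.symm hne)
    exact N.notMem_edges_root u (hSN.2 hu)
  exact ⟨hSN.2, T.subset_verts.trans hsubdiv.verts_subset, hTroot ▸ hpar⟩

def extendFrom (N : PhyloNet V X) (S : Dgraph V) (F : V → C) (v : V) : C :=
  if _ : v ∉ S.verts ∧ (S.preferredParent N.G v, v) ∈ N.G.edges then
    N.extendFrom S F (S.preferredParent N.G v)
  else F v
termination_by N.G.rank v
decreasing_by exact Dgraph.rank_lt_of_mem_edges N.acyclic ‹_ ∧ _›.2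

variable {N : PhyloNet V X} {S : Dgraph V} {F : V → C}

theorem extendFrom_of_mem {v : V} (hv : v ∈ S.verts) : N.extendFrom S F v = F v := by
  rw [extendFrom, dif_neg fun h => h.1 hv]

theorem extendFrom_of_notMem {v : V} (hv : v ∉ S.verts)
    (h : (S.preferredParent N.G v, v) ∈ N.G.edges) :
    N.extendFrom S F v = N.extendFrom S F (S.preferredParent N.G v) := by
  rw [extendFrom, dif_pos ⟨hv, h⟩]

theorem parentChain_root {p : V → V}
    (hp : ∀ v ∈ N.G.verts, v ≠ N.root → (p v, v) ∈ N.G.edges)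
    {v : V} (hv : v ∈ N.G.verts) : N.G.ParentChain p v N.root := by
  induction hr : N.G.rank v using Nat.strong_induction_on generalizing v with
  | _ r ih =>
    by_cases hvr : v = N.root
    · exact hvr ▸ .refl
    have hpv := hp v hv hvr
    exact .head ⟨rfl, hpv⟩ (ih _ (hr ▸ Dgraph.rank_lt_of_mem_edges N.acyclic hpv)
      (N.G.edges_sub _ hpv).1 rfl)

end PhyloNet

namespace PhyloNet.IsAncestralSubgraph

variable {V C : Type} {X : Finset V} {N : PhyloNet V X} {S : Dgraph V} {F : V → C}

theorem preferredParent_mem_edges (hS : N.IsAncestralSubgraph S) {v : V} (hv : v ∈ N.G.verts)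
    (hvr : v ≠ N.root) : (S.preferredParent N.G v, v) ∈ N.G.edges :=
  Dgraph.preferredParent_mem_edges hS.edges_subset (N.exists_mem_edges_of_ne_root hv hvr)

theorem extendFrom_preferredParent (hS : N.IsAncestralSubgraph S) {t : V}
    (ht : (S.preferredParent N.G t, t) ∈ N.G.edges)
    (hF : (S.preferredParent N.G t, t) ∈ S.edges → F (S.preferredParent N.G t) = F t) :
    N.extendFrom S F (S.preferredParent N.G t) = N.extendFrom S F t := by
  by_cases htS : t ∈ S.verts
  · have hpt := Dgraph.preferredParent_mem_edges_of_exists N.G <| hS.exists_mem_edges t htS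
      fun h => N.notMem_edges_root _ (h ▸ ht)
    rw [extendFrom_of_mem htS, extendFrom_of_mem (S.edges_sub _ hpt).1, hF hpt]
  · exact (extendFrom_of_notMem htS ht).symm

theorem ne_preferredParent_of_mem_changingEdges (hS : N.IsAncestralSubgraph S) {x y : V}
    (h : (x, y) ∈ changingEdges (N.extendFrom S F) N.G \ S.edges) :
    x ≠ S.preferredParent N.G y ∧ (S.preferredParent N.G y, y) ∈ N.G.edges ∧
      N.IsRetic y := by
  obtain ⟨⟨he, hch⟩, hxy⟩ := Finset.mem_sdiff.mp h |>.imp_left mem_changingEdges.mp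
  have hpy := Dgraph.preferredParent_mem_edges hS.edges_subset ⟨x, he⟩
  have hxp : x ≠ S.preferredParent N.G y := by
    rintro rfl
    exact hch (hS.extendFrom_preferredParent he fun h => absurd h hxy)
  have h2 : 1 < N.G.inDeg y := Finset.one_lt_card.mpr
    ⟨_, Dgraph.mem_inEdges he, _, Dgraph.mem_inEdges hpy, fun h => hxp (Prod.ext_iff.mp h).1⟩
  exact ⟨hxp, hpy, le_antisymm (N.inDeg_le_two y) h2⟩

theorem injOn_snd_changingEdges (hS : N.IsAncestralSubgraph S) :
    Set.InjOn Prod.snd (↑(changingEdges (N.extendFrom S F) N.G \ S.edges) : Set (V × V)) := by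
  rintro ⟨x, y⟩ h ⟨x', y'⟩ h' (rfl : y = y')
  rw [Finset.mem_coe] at h h'
  obtain ⟨hxp, hpy, -⟩ := hS.ne_preferredParent_of_mem_changingEdges h
  obtain ⟨hx'p, -, -⟩ := hS.ne_preferredParent_of_mem_changingEdges h'
  have he := (mem_changingEdges.mp (Finset.mem_sdiff.mp h).1).1
  have he' := (mem_changingEdges.mp (Finset.mem_sdiff.mp h').1).1
  by_contra hxx'
  have : 2 < N.G.inDeg y := Finset.two_lt_card.mpr
    ⟨_, Dgraph.mem_inEdges he, _, Dgraph.mem_inEdges he', _, Dgraph.mem_inEdges hpy,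
      by simpa using hxx', by simpa using hxp, by simpa using hx'p⟩
  have := N.inDeg_le_two y
  omega

theorem exists_isBicomp_of_mem_changingEdges (hS : N.IsAncestralSubgraph S) {x y : V}
    (h : (x, y) ∈ changingEdges (N.extendFrom S F) N.G \ S.edges) :
    ∃ B, N.G.IsBicomp B ∧ y ∈ B.verts ∧ ∃ e ∈ B.edges, e ∈ changingEdges F S := by
  set p := S.preferredParent N.G
  set F' := N.extendFrom S F
  obtain ⟨-, hpy, -⟩ := hS.ne_preferredParent_of_mem_changingEdges h
  obtain ⟨he, hch⟩ := mem_changingEdges.mp (Finset.mem_sdiff.mp h).1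
  have hroot : ∀ {v}, v ∈ N.G.verts → N.G.ParentChain p v N.root :=
    parentChain_root fun _ hv hvr => hS.preferredParent_mem_edges hv hvr
  have hx := (N.G.edges_sub _ he).1
  obtain ⟨m, hxm, hpm, hmeet⟩ := Dgraph.exists_parentChain_meet N.acyclic hx (hroot hx)
    (hroot (N.G.edges_sub _ hpy).1)
  set L := N.G.lasso p x (p y) y m
  have hLN : L.IsSubgraph N.G := Dgraph.lasso_isSubgraph he hpy
  obtain ⟨B, hB, hLB⟩ := Dgraph.exists_isBicomp hLN <| Dgraph.lasso_biconnected N.acyclic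
    (Dgraph.rank_lt_of_mem_edges N.acyclic he) (Dgraph.rank_lt_of_mem_edges N.acyclic hpy)
    hxm hpm hmeet
  refine ⟨B, hB,
    hLB.1 (Dgraph.mem_ofEdges_verts.mpr ⟨_, Dgraph.mem_lasso_edges_left, Or.inr rfl⟩), ?_⟩
  by_contra! hconst
  have hstep : ∀ t, (p t, t) ∈ L.edges → F' (p t) = F' t := fun t ht =>
    hS.extendFrom_preferredParent (hLN.2 ht) fun htS => by
      by_contra hne
      exact hconst _ (hLB.2 ht) (mem_changingEdges.mpr ⟨htS, hne⟩)
  -- Without a changing edge of `S` on the cycle `L`, `F'` would be constant around it.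
  have hchain : ∀ {z}, N.G.ParentChain p z m → N.G.chainEdges p z m ⊆ L.edges →
      F' z = F' m := by
    intro z hzm hzL
    exact hzm.apply_eq_of_forall fun t hzt htm ht =>
      (hstep t (hzL (Dgraph.mem_chainEdges hzt htm ht))).symm
  exact hch ((hchain hxm Dgraph.chainEdges_subset_lasso_edges_left).trans
    ((hchain hpm Dgraph.chainEdges_subset_lasso_edges_right).symm.trans
      (hstep y Dgraph.mem_lasso_edges_right)))

theorem card_le_of_forall_mem_isBicomp (hS : N.IsAncestralSubgraph S) {k : ℕ}
    (hlev : N.IsLevel k) {B : Dgraph V} (hB : N.G.IsBicomp B) {s : Finset (V × V)}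
    (hs : s ⊆ changingEdges (N.extendFrom S F) N.G \ S.edges)
    (hsB : ∀ e ∈ s, e.2 ∈ B.verts) :
    s.card ≤ k := by
  rw [← Finset.card_image_of_injOn (hS.injOn_snd_changingEdges.mono (Finset.coe_subset.mpr hs))]
  refine (Finset.card_le_card fun y hy => ?_).trans (hlev B hB)
  obtain ⟨⟨x, y⟩, he, rfl⟩ := Finset.mem_image.mp hy
  exact Finset.mem_filter.mpr
    ⟨hsB _ he, (hS.ne_preferredParent_of_mem_changingEdges (hs he)).2.2⟩

/-- Each changing edge outside `S` is charged to a changing edge of `S` in the biconnected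
component of its head; heads are distinct reticulations, at most `k` per component. -/
theorem card_changingEdges_sdiff_le (hS : N.IsAncestralSubgraph S) {k : ℕ} (hlev : N.IsLevel k) :
    (changingEdges (N.extendFrom S F) N.G \ S.edges).card ≤ k * ch F S := by
  set bad := changingEdges (N.extendFrom S F) N.G \ S.edges
  have : Nonempty V := ⟨N.root⟩
  have : Nonempty (Dgraph V) := ⟨N.G⟩
  choose! B hB hyB φ hφB hφS using fun (e : V × V) (he : e ∈ bad) =>
    hS.exists_isBicomp_of_mem_changingEdges he
  refine (Finset.card_le_mul_card_image (f := φ) bad k fun b hb => ?_).trans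
    (Nat.mul_le_mul_left k (Finset.card_le_card fun b hb => ?_))
  · obtain ⟨e₀, he₀, rfl⟩ := Finset.mem_image.mp hb
    refine hS.card_le_of_forall_mem_isBicomp hlev (hB e₀ he₀) (Finset.filter_subset _ _)
      fun e he => ?_
    obtain ⟨he, hφe⟩ := Finset.mem_filter.mp he
    have hne := N.fst_ne_snd_of_mem_edges (hS.edges_subset (mem_changingEdges.mp (hφS e he)).1)
    have hBe : B e = B e₀ :=
      (hB e he).eq_of_mem_edges (hB e₀ he₀) hne (hφB e he) (hφe ▸ hφB e₀ he₀)
    exact hBe ▸ hyB e he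
  · obtain ⟨e, he, rfl⟩ := Finset.mem_image.mp hb
    exact hφS e he

theorem ch_extendFrom_le (hS : N.IsAncestralSubgraph S) {k : ℕ} (hlev : N.IsLevel k) :
    ch (N.extendFrom S F) N.G ≤ (k + 1) * ch F S := by
  have hSF : ch (N.extendFrom S F) S = ch F S := ch_congr fun _ hv => extendFrom_of_mem hv
  calc ch (N.extendFrom S F) N.G
      ≤ ch F S + (changingEdges (N.extendFrom S F) N.G \ S.edges).card :=
        hSF ▸ ch_le_ch_add_card_sdiff _ N.G S
    _ ≤ ch F S + k * ch F S := Nat.add_le_add_left (hS.card_changingEdges_sdiff_le hlev) _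
    _ = (k + 1) * ch F S := by ring

end PhyloNet.IsAncestralSubgraph

namespace PhyloNet

variable {V C : Type} {X : Finset V}

theorem PS_le_mul_PS_of_displays {N T T' : PhyloNet V X} {k : ℕ} (hlev : N.IsLevel k)
    (hT : N.Displays T) (hT' : N.Displays T') (f : V → C) :
    PS X f T.G ≤ (k + 1) * PS X f T'.G := by
  obtain ⟨-, S, hSN, -, hST⟩ := hT
  obtain ⟨-, S', hS'⟩ := hT'
  have hA := hS'.isAncestralSubgraph
  obtain ⟨F₀, hF₀, hF₀PS⟩ := exists_ch_eq_PS X f T'.G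
  obtain ⟨F, hF, hFch⟩ := exists_ch_le_of_isSubdivisionOf F₀ hS'.2.2
  have hext : IsExtension X f (N.extendFrom S' F) := fun x hx => by
    rw [extendFrom_of_mem (hA.subset_verts hx), hF x (T'.subset_verts hx), hF₀ x hx]
  calc PS X f T.G ≤ ch (N.extendFrom S' F) T.G := PS_le_ch _ hext
    _ ≤ ch (N.extendFrom S' F) S := ch_le_ch_of_isSubdivisionOf _ hST
    _ ≤ ch (N.extendFrom S' F) N.G := ch_mono _ hSN.2
    _ ≤ (k + 1) * ch F S' := hA.ch_extendFrom_le hlev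
    _ ≤ (k + 1) * PS X f T'.G := Nat.mul_le_mul_left _ (hFch.trans hF₀PS.le)

theorem exists_displays_PS_eq_PSsw {N T : PhyloNet V X} (hT : N.Displays T) (f : V → C) :
    ∃ T', N.Displays T' ∧ PS X f T'.G = PSsw N f :=
  Nat.sInf_mem (s := {n | ∃ T' : PhyloNet V X, N.Displays T' ∧ PS X f T'.G = n})
    ⟨_, T, hT, rfl⟩

end PhyloNet

theorem main_bound_general {V : Type} {X : Finset V} (N T : PhyloNet V X) (k : ℕ)
    (hlev : N.IsLevel k) (hT : N.Displays T)
    {n : ℕ} (C : Fin n → Type) (A : (i : Fin n) → V → C i) :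
    (∑ i, PS X (A i) T.G) ≤ (k + 1) * (∑ i, PSsw N (A i)) ∧
    (∑ i, PS X (A i) T.G) ≤
      (k + 1) * sInf {m | ∃ T' : PhyloNet V X, N.Displays T' ∧ (∑ i, PS X (A i) T'.G) = m} := by
  rw [Finset.mul_sum]
  refine ⟨Finset.sum_le_sum fun i _ => ?_, ?_⟩
  · obtain ⟨T', hT', hPS⟩ := PhyloNet.exists_displays_PS_eq_PSsw hT (A i)
    exact hPS ▸ PhyloNet.PS_le_mul_PS_of_displays hlev hT hT' (A i)
  · obtain ⟨T', hT', hPS⟩ := Nat.sInf_mem (s := {m | ∃ T' : PhyloNet V X, N.Displays T' ∧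
      (∑ i, PS X (A i) T'.G) = m}) ⟨_, T, hT, rfl⟩
    rw [← hPS, Finset.mul_sum]
    exact Finset.sum_le_sum fun i _ => PhyloNet.PS_le_mul_PS_of_displays hlev hT hT' (A i)

/-- **Theorem 1 (main result).** Let `N` be a rooted binary level-`k` phylogenetic network
on `X`, let `T` be a phylogenetic `X`-tree in `D(N)`, and let `A = (f_1,…,f_n)` be a
(gap-free) alignment of characters on `X`. Then `PS(A,T) ≤ (k+1)·PS_sw(A,N)` and
`PS(A,T) ≤ (k+1)·PS_sw'(A,N)`. -/
theorem main_bound {V : Type} {X : Finset V} (N T : PhyloNet V X) (k : ℕ)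
    (hlev : N.IsLevel k) (hT : N.Displays T)
    {n : ℕ} (C : Fin n → Type) (A : (i : Fin n) → V → C i)
    (hA : ∀ i, IsCharacter X (A i)) :
    (∑ i, PS X (A i) T.G) ≤ (k + 1) * (∑ i, PSsw N (A i)) ∧
    (∑ i, PS X (A i) T.G) ≤
      (k + 1) * sInf {m | ∃ T' : PhyloNet V X, N.Displays T' ∧ (∑ i, PS X (A i) T'.G) = m} :=
  main_bound_general N T k hlev hT C A

end
end

section
/- Let f be a character on X, and let S be a subdivision of a rooted binary phylogenetic X-tree. If F is an extension of f to V(S) such that F(u)≠F(v) for some edge (u,v) of the root path of S, then there exists an extension F' of f to V(S) such that F'(u)=F'(v) and ch(F',S)<ch(F,S). -/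
noncomputable section
attribute [local instance] Classical.propDecidable

namespace Obs2Aux

lemma inDeg_zero_of_not_mem {V : Type} (G : Dgraph V) {x : V} (hx : x ∉ G.verts) :
    G.inDeg x = 0 := by
  rw [Dgraph.inDeg, Finset.card_eq_zero, Finset.filter_eq_empty_iff]
  rintro e he rfl
  exact hx (G.edges_sub e he).2

lemma no_in_edge {V : Type} (G : Dgraph V) {b : V} {e : V × V} (h : G.inDeg b = 0)
    (he : e ∈ G.edges) (h2 : e.2 = b) : False := by
  rw [Dgraph.inDeg, Finset.card_eq_zero, Finset.filter_eq_empty_iff] at h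
  exact h he h2

lemma no_out_edge {V : Type} (G : Dgraph V) {a : V} {e : V × V} (h : G.outDeg a = 0)
    (he : e ∈ G.edges) (h2 : e.1 = a) : False := by
  rw [Dgraph.outDeg, Finset.card_eq_zero, Finset.filter_eq_empty_iff] at h
  exact h he h2

lemma out_unique {V : Type} (G : Dgraph V) {a b c : V} (h1 : G.outDeg a ≤ 1)
    (hb : (a, b) ∈ G.edges) (hc : (a, c) ∈ G.edges) : b = c := by
  have := Finset.card_le_one.mp h1 (a, b) (Finset.mem_filter.mpr ⟨hb, rfl⟩)
    (a, c) (Finset.mem_filter.mpr ⟨hc, rfl⟩)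
  exact congrArg Prod.snd this

lemma in_unique {V : Type} (G : Dgraph V) {a b c : V} (h1 : G.inDeg c ≤ 1)
    (hb : (a, c) ∈ G.edges) (hc : (b, c) ∈ G.edges) : a = b := by
  have := Finset.card_le_one.mp h1 (a, c) (Finset.mem_filter.mpr ⟨hb, rfl⟩)
    (b, c) (Finset.mem_filter.mpr ⟨hc, rfl⟩)
  exact congrArg Prod.fst this

/-- Invariant preserved by subdivision steps. -/
def Inv {V : Type} (X : Finset V) (r : V) (G : Dgraph V) : Prop :=
  (∀ x, G.inDeg x ≤ 1) ∧ G.inDeg r = 0 ∧ r ∈ G.verts ∧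
    ∀ x ∈ X, x ∈ G.verts ∧ G.outDeg x = 0

lemma inv_step {V : Type} {X : Finset V} {r : V} {G G' : Dgraph V}
    (h : Dgraph.SubdivStep G G') (hI : Inv X r G) : Inv X r G' := by
  obtain ⟨u, w, v, huw, hv, hV, hE⟩ := h
  obtain ⟨hin, hroot, hrmem, hX⟩ := hI
  have hu_mem : u ∈ G.verts := (G.edges_sub _ huw).1
  have hw_mem : w ∈ G.verts := (G.edges_sub _ huw).2
  have hwv : w ≠ v := fun h => hv (h ▸ hw_mem)
  refine ⟨?_, ?_, ?_, ?_⟩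
  · intro x
    by_cases hxv : v = x
    · subst hxv
      rw [Dgraph.inDeg, hE]
      refine le_trans (Finset.card_le_card (fun e he => ?_))
        (le_of_eq (Finset.card_singleton (u, v)))
      simp only [Finset.mem_filter, Finset.mem_insert, Finset.mem_erase] at he
      obtain ⟨h1, h2⟩ := he
      rcases h1 with rfl | rfl | ⟨_, h1⟩
      · exact Finset.mem_singleton_self _
      · exact absurd h2 hwv
      · exact absurd (h2 ▸ (G.edges_sub e h1).2) hv
    · by_cases hxw : w = x
      · subst hxw
        have hcard : (G.edges.filter (fun e => e.2 = w)).card = 1 :=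
          le_antisymm (hin w) (Finset.card_pos.mpr ⟨(u, w), Finset.mem_filter.mpr ⟨huw, rfl⟩⟩)
        have hsingle : G.edges.filter (fun e => e.2 = w) = {(u, w)} := by
          rw [Finset.card_eq_one] at hcard
          obtain ⟨a, ha⟩ := hcard
          have : (u, w) ∈ ({a} : Finset (V × V)) := ha ▸ Finset.mem_filter.mpr ⟨huw, rfl⟩
          rw [Finset.mem_singleton] at this
          rw [ha, this]
        rw [Dgraph.inDeg, hE]
        refine le_trans (Finset.card_le_card (fun e he => ?_))
          (le_of_eq (Finset.card_singleton (v, w)))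
        simp only [Finset.mem_filter, Finset.mem_insert, Finset.mem_erase] at he
        obtain ⟨h1, h2⟩ := he
        rcases h1 with rfl | rfl | ⟨hne', h1⟩
        · exact absurd h2 (fun hh => hwv hh.symm)
        · exact Finset.mem_singleton_self _
        · exfalso
          have : e ∈ G.edges.filter (fun e => e.2 = w) := Finset.mem_filter.mpr ⟨h1, h2⟩
          rw [hsingle, Finset.mem_singleton] at this
          exact hne' this
      · rw [Dgraph.inDeg, hE]
        refine le_trans (Finset.card_le_card (fun e he => ?_)) (hin x)
        simp only [Finset.mem_filter, Finset.mem_insert, Finset.mem_erase] at he ⊢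
        obtain ⟨h1, h2⟩ := he
        rcases h1 with rfl | rfl | ⟨_, h1⟩
        · exact absurd h2 hxv
        · exact absurd h2 hxw
        · exact ⟨h1, h2⟩
  · have hrv : r ≠ v := fun h => hv (h ▸ hrmem)
    rw [Dgraph.inDeg, Finset.card_eq_zero, Finset.filter_eq_empty_iff, hE]
    intro e he h2
    simp only [Finset.mem_insert, Finset.mem_erase] at he
    rcases he with rfl | rfl | ⟨_, he⟩
    · exact hrv h2.symm
    · exact no_in_edge G hroot huw h2
    · exact no_in_edge G hroot he h2
  · rw [hV]; exact Finset.mem_insert_of_mem hrmem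
  · intro x hx
    obtain ⟨hxm, hxo⟩ := hX x hx
    have hxv : x ≠ v := fun h => hv (h ▸ hxm)
    refine ⟨hV ▸ Finset.mem_insert_of_mem hxm, ?_⟩
    rw [Dgraph.outDeg, Finset.card_eq_zero, Finset.filter_eq_empty_iff, hE]
    intro e he h2
    simp only [Finset.mem_insert, Finset.mem_erase] at he
    rcases he with rfl | rfl | ⟨_, he⟩
    · exact no_out_edge G hxo huw h2
    · exact hxv h2.symm
    · exact no_out_edge G hxo he h2

lemma inv_of_subdiv {V : Type} {X : Finset V} {r : V} {G S : Dgraph V}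
    (h : Relation.ReflTransGen Dgraph.SubdivStep G S) (hG : Inv X r G) : Inv X r S := by
  induction h with
  | refl => exact hG
  | tail _ hstep ih => exact inv_step hstep ih

end Obs2Aux

/-- **Observation 2.** Let `f` be a character on `X` and let `S` be a subdivision of a rooted
binary phylogenetic `X`-tree. If `F` is an extension of `f` to `V(S)` with `F(u) ≠ F(v)` for
some edge `(u,v)` of the root path of `S`, then there is an extension `F'` of `f` to `V(S)`
with `F'(u) = F'(v)` and `ch(F',S) < ch(F,S)`. -/
theorem root_path_change_not_minimal {V C : Type} {X : Finset V} (T : PhyloNet V X)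
    (hT : T.IsTreeNet) (f : V → C) (hf : IsCharacter X f)
    (S : Dgraph V) (hS : S.IsSubdivisionOf T.G)
    (F : V → C) (hF : IsExtension X f F)
    (u v : V) (huv : rootPathEdge S T.root u v) (hne : F u ≠ F v) :
    ∃ F' : V → C, IsExtension X f F' ∧ F' u = F' v ∧ ch F' S < ch F S := by
  classical
  obtain ⟨huvE, hdegu, hchain⟩ := huv
  obtain ⟨hin, hroot0, _, hXv⟩ : Obs2Aux.Inv X T.root S := by
    refine Obs2Aux.inv_of_subdiv hS ⟨?_, T.root_inDeg, T.root_mem, ?_⟩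
    · intro x
      by_cases hx : x ∈ T.G.verts
      · exact hT x hx
      · simp [Obs2Aux.inDeg_zero_of_not_mem T.G hx]
    · intro x hx
      have hx' : x ∈ T.G.leaves := by rw [T.leaves_eq]; exact hx
      exact Finset.mem_filter.mp hx'
  set rel : V → V → Prop := fun a b => (a, b) ∈ S.edges ∧ S.outDeg a = 1 with hrel
  set Q : V → Prop := fun w => Relation.ReflTransGen rel T.root w ∧ Relation.ReflTransGen rel w u
    with hQdef
  set F' : V → C := fun w => if Q w then F v else F w with hF'def
  have hQu : Q u := ⟨hchain, Relation.ReflTransGen.refl⟩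
  have hF'v : F' v = F v := by
    by_cases h : Q v <;> simp [hF'def, h]
  have hF'u : F' u = F v := by rw [hF'def]; exact if_pos hQu
  have hQ_out : ∀ w, Q w → S.outDeg w = 1 := by
    intro w hw
    rcases Relation.ReflTransGen.cases_head hw.2 with h | ⟨c, hc, _⟩
    · exact h ▸ hdegu
    · exact hc.2
  have hforward : ∀ a b, Q a → (a, b) ∈ S.edges → (a = u ∧ b = v) ∨ Q b := by
    intro a b hQa hab
    rcases Relation.ReflTransGen.cases_head hQa.2 with h | ⟨c, hc, hcu⟩
    · subst h
      exact Or.inl ⟨rfl, Obs2Aux.out_unique S (le_of_eq hdegu) hab huvE⟩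
    · obtain rfl : b = c := Obs2Aux.out_unique S (le_of_eq hc.2) hab hc.1
      exact Or.inr ⟨hQa.1.tail ⟨hab, hc.2⟩, hcu⟩
  have hbackward : ∀ a b, Q b → (a, b) ∈ S.edges → Q a := by
    intro a b hQb hab
    rcases Relation.ReflTransGen.cases_tail hQb.1 with h | ⟨c, hrc, hcb⟩
    · subst h
      exact (Obs2Aux.no_in_edge S hroot0 hab rfl).elim
    · obtain rfl : a = c := Obs2Aux.in_unique S (hin b) hab hcb.1
      exact ⟨hrc, Relation.ReflTransGen.head ⟨hab, hcb.2⟩ hQb.2⟩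
  refine ⟨F', ?_, ?_, ?_⟩
  · intro x hx
    have hnQ : ¬ Q x := by
      intro h
      have h1 := hQ_out x h
      have h0 := (hXv x hx).2
      omega
    simp only [hF'def, if_neg hnQ]
    exact hF x hx
  · rw [hF'u, hF'v]
  · have hsub : S.edges.filter (fun e => F' e.1 ≠ F' e.2) ⊆
        (S.edges.filter (fun e => F e.1 ≠ F e.2)).erase (u, v) := by
      intro e he
      obtain ⟨heS, hech⟩ := Finset.mem_filter.mp he
      by_cases hQa : Q e.1
      · exfalso
        rcases hforward e.1 e.2 hQa heS with ⟨h1, h2⟩ | hQb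
        · apply hech
          have e1 : F' e.1 = F v := by rw [h1, hF'u]
          have e2 : F' e.2 = F v := by rw [h2, hF'v]
          rw [e1, e2]
        · apply hech
          show (if Q e.1 then F v else F e.1) = (if Q e.2 then F v else F e.2)
          rw [if_pos hQa, if_pos hQb]
      · have hQb : ¬ Q e.2 := fun h => hQa (hbackward e.1 e.2 h heS)
        refine Finset.mem_erase.mpr ⟨?_, Finset.mem_filter.mpr ⟨heS, ?_⟩⟩
        · rintro rfl
          exact hQa hQu
        · simpa only [hF'def, if_neg hQa, if_neg hQb] using hech
    have hmem : (u, v) ∈ S.edges.filter (fun e => F e.1 ≠ F e.2) :=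
      Finset.mem_filter.mpr ⟨huvE, hne⟩
    calc ch F' S ≤ ((S.edges.filter (fun e => F e.1 ≠ F e.2)).erase (u, v)).card :=
          Finset.card_le_card hsub
      _ < ch F S := Finset.card_erase_lt_of_mem hmem

end
end
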